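/- arXiv:2409.06602 — 2 statements merged into one kernel-verified Lean document; each statement's English description precedes it below -/
import Mathlib

section
/- For every angle ω ∈ (π, 2π), the Stokes eigenvalue equation sin²(κω) − κ² sin²(ω) = 0 admits a real root κ in the open interval (1/2, π/ω). -/
open Real Set

/-- For every angle `ω ∈ (π, 2π)`, the Stokes eigenvalue equation
`sin²(κω) − κ² sin²(ω) = 0` admits a real root `κ ∈ (1/2, π/ω)`. -/
theorem stokes_eigenvalue_exists (ω : ℝ) (hω : ω ∈ Ioo π (2 * π)) :
    ∃ κ : ℝ, κ ∈ Ioo (1 / 2 : ℝ) (π / ω) ∧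
      Real.sin (κ * ω) ^ 2 - κ ^ 2 * Real.sin ω ^ 2 = 0 := by
  obtain ⟨h1, h2⟩ := hω
  have hπ : (0:ℝ) < π := Real.pi_pos
  have hω0 : 0 < ω := lt_trans hπ h1
  set f : ℝ → ℝ := fun κ => Real.sin (κ * ω) ^ 2 - κ ^ 2 * Real.sin ω ^ 2 with hf
  have hcont : ContinuousOn f (Icc (1/2 : ℝ) (π / ω)) := by
    apply Continuous.continuousOn
    continuity
  have hle : (1/2 : ℝ) < π / ω := by
    rw [lt_div_iff₀ hω0]
    linarith
  -- sin(ω/2) > 0 since ω/2 ∈ (π/2, π)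
  have hs2 : 0 < Real.sin (ω / 2) := by
    apply Real.sin_pos_of_pos_of_lt_pi <;> linarith
  -- f(1/2) = sin(ω/2)^4 > 0
  have hfa : 0 < f (1/2) := by
    have hsin : Real.sin ω = 2 * Real.sin (ω/2) * Real.cos (ω/2) := by
      have := Real.sin_two_mul (ω/2)
      rw [show 2 * (ω/2) = ω by ring] at this
      linarith
    have hpyth := Real.sin_sq_add_cos_sq (ω/2)
    have : f (1/2) = Real.sin (ω/2) ^ 4 := by
      simp only [hf]
      rw [show (1/2 : ℝ) * ω = ω / 2 by ring, hsin]
      nlinarith [hpyth]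
    rw [this]
    positivity
  -- f(π/ω) = -(π/ω)^2 sin²ω < 0
  have hsω : Real.sin ω < 0 := by
    have h := Real.sin_pos_of_pos_of_lt_pi (x := ω - π) (by linarith) (by linarith)
    have : Real.sin (ω - π + π) = -Real.sin (ω - π) := by
      rw [Real.sin_add_pi]
    rw [show ω - π + π = ω by ring] at this
    linarith
  have hfb : f (π / ω) < 0 := by
    have : (π / ω) * ω = π := div_mul_cancel₀ π (ne_of_gt hω0)
    simp only [hf, this, Real.sin_pi]
    have h1 : 0 < (π / ω) ^ 2 := by positivity
    have h2 : 0 < Real.sin ω ^ 2 := by nlinarith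
    nlinarith
  have key : (0:ℝ) ∈ f '' Ioo (1/2 : ℝ) (π / ω) := by
    apply intermediate_value_Ioo' (le_of_lt hle) hcont
    exact ⟨hfb, hfa⟩
  obtain ⟨κ, hκmem, hκ⟩ := key
  exact ⟨κ, hκmem, hκ⟩
end

section
/- Let L > 0, 0 < λ < 1, let p = 1/δ and q = 1/(1−δ) for some δ ∈ (0, 1−λ), and let g : [0, L] → ℝ be absolutely continuous with g(0) = 0 and g′ ∈ L^p(0, L). Then ∫₀^L |g(r)| r^{−λ−1} dr ≤ C ‖g′‖_{L^p(0,L)} for a constant C depending only on L, λ, p. In particular the integral is finite. -/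
/-!
By Hölder's inequality on `(0, r)`,
`|g r| = |∫₀^r g'| ≤ ‖g'‖_{L^p(0,L)} r^{1/q} = ‖g'‖_{L^p(0,L)} r^{1-δ}`.
Hence `|g r| r^{-λ-1} ≤ ‖g'‖_{L^p} r^{-δ-λ}`, which is integrable on `(0, L)` because `δ + λ < 1`,
and integrating gives the estimate with `C = L^{1-δ-λ} / (1-δ-λ)`.
-/

open Real Set MeasureTheory

theorem abs_intervalIntegral_le_rpow_integral_mul_rpow {p q : ℝ} (hpq : p.HolderConjugate q)
    {f : ℝ → ℝ} {a b : ℝ} (hab : a ≤ b)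
    (hf : AEStronglyMeasurable f (volume.restrict (Ioc a b)))
    (hfp : IntegrableOn (fun t => |f t| ^ p) (Ioc a b)) :
    |∫ t in a..b, f t| ≤ (∫ t in Ioc a b, |f t| ^ p) ^ (1 / p) * (b - a) ^ (1 / q) := by
  have hf_memLp : MemLp (fun t => |f t|) (ENNReal.ofReal p) (volume.restrict (Ioc a b)) := by
    refine ((integrable_norm_rpow_iff hf (by simpa using hpq.pos) ENNReal.ofReal_ne_top).1 ?_).abs
    rw [ENNReal.toReal_ofReal hpq.nonneg]; exact hfp
  have holder := integral_mul_le_Lp_mul_Lq_of_nonneg hpq (.of_forall fun t => abs_nonneg (f t))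
    (.of_forall fun _ => zero_le_one) hf_memLp (memLp_const (1 : ℝ))
  simp only [mul_one, one_rpow, setIntegral_const, smul_eq_mul] at holder
  calc |∫ t in a..b, f t| ≤ ∫ t in Ioc a b, |f t| := by
        rw [intervalIntegral.integral_of_le hab]; exact abs_integral_le_integral_abs
    _ ≤ _ := by simpa [Real.volume_Ioc, hab] using holder

theorem abs_intervalIntegral_le_rpow_integral_mul_rpow_of_le {p q : ℝ} (hpq : p.HolderConjugate q)
    {f : ℝ → ℝ} {a r b : ℝ} (har : a ≤ r) (hrb : r ≤ b)
    (hf : AEStronglyMeasurable f (volume.restrict (Ioc a b)))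
    (hfp : IntegrableOn (fun t => |f t| ^ p) (Ioc a b)) :
    |∫ t in a..r, f t| ≤ (∫ t in Ioc a b, |f t| ^ p) ^ (1 / p) * (r - a) ^ (1 / q) := by
  have hsub : Ioc a r ⊆ Ioc a b := Ioc_subset_Ioc_right hrb
  have hnonneg : ∀ t, 0 ≤ |f t| ^ p := fun t => rpow_nonneg (abs_nonneg _) _
  refine (abs_intervalIntegral_le_rpow_integral_mul_rpow hpq har
    (hf.mono_measure (Measure.restrict_mono hsub le_rfl)) (hfp.mono_set hsub)).trans ?_
  gcongr
  · exact hpq.one_div_nonneg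
  · exact .of_forall hnonneg

theorem setIntegral_Ioc_le_of_abs_le_mul_rpow {f : ℝ → ℝ} {A e L : ℝ} (hL : 0 ≤ L) (he : -1 < e)
    (hf : AEStronglyMeasurable f (volume.restrict (Ioc 0 L)))
    (hbound : ∀ r ∈ Ioc 0 L, |f r| ≤ A * r ^ e) :
    ∫ r in Ioc 0 L, f r ≤ A * (L ^ (e + 1) / (e + 1)) := by
  have hpow : IntegrableOn (fun r => A * r ^ e) (Ioc 0 L) :=
    ((intervalIntegrable_iff_integrableOn_Ioc_of_le hL).1
      (intervalIntegral.intervalIntegrable_rpow' he)).const_mul A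
  have hf_int : IntegrableOn f (Ioc 0 L) :=
    hpow.mono' hf ((ae_restrict_iff' measurableSet_Ioc).2 (.of_forall hbound))
  calc ∫ r in Ioc 0 L, f r ≤ ∫ r in Ioc 0 L, A * r ^ e :=
        setIntegral_mono_on hf_int hpow measurableSet_Ioc fun r hr =>
          (le_abs_self _).trans (hbound r hr)
    _ = A * (L ^ (e + 1) / (e + 1)) := by
        rw [integral_const_mul, ← intervalIntegral.integral_of_le hL, integral_rpow (.inl he),
          zero_rpow (by linarith), sub_zero]

theorem hardy_boundary_estimate_general (L lam δ p : ℝ) (hL : 0 < L)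
    (hlam : 0 < lam) (hδ : δ ∈ Ioo (0 : ℝ) (1 - lam))
    (hp : p = 1 / δ) :
    ∃ C : ℝ, 0 < C ∧
      ∀ g g' : ℝ → ℝ,
        IntervalIntegrable g' volume 0 L →
        (∀ x ∈ Icc (0 : ℝ) L, g x = ∫ r in (0 : ℝ)..x, g' r) →
        IntegrableOn (fun r => |g' r| ^ p) (Ioc (0 : ℝ) L) volume →
        (∫ r in Ioc (0 : ℝ) L, |g r| * r ^ (-lam - 1)) ≤
          C * (∫ r in Ioc (0 : ℝ) L, |g' r| ^ p) ^ (1 / p) := by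
  obtain ⟨hδ0, hδ1⟩ := hδ
  have hexp : 0 < 1 - δ - lam := by linarith
  have hpq : p.HolderConjugate (1 / (1 - δ)) :=
    hp ▸ holderConjugate_one_div hδ0 (by linarith) (by ring)
  refine ⟨L ^ (1 - δ - lam) / (1 - δ - lam), by positivity, fun g g' hg' hg hg'p => ?_⟩
  have hg_cont : ContinuousOn g (Icc 0 L) := by
    have := intervalIntegral.continuousOn_primitive_interval' hg' left_mem_uIcc
    exact (uIcc_of_le hL.le ▸ this).congr hg
  have hmeas :
      AEStronglyMeasurable (fun r => |g r| * r ^ (-lam - 1)) (volume.restrict (Ioc 0 L)) :=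
    ((hg_cont.mono Ioc_subset_Icc_self).abs.mul
      (continuousOn_id.rpow_const fun r hr => .inl hr.1.ne')).aestronglyMeasurable measurableSet_Ioc
  have hbound : ∀ r ∈ Ioc 0 L, |(|g r| * r ^ (-lam - 1))| ≤
      (∫ t in Ioc 0 L, |g' t| ^ p) ^ (1 / p) * r ^ (-δ - lam) := by
    intro r ⟨hr0, hrL⟩
    have hgr := abs_intervalIntegral_le_rpow_integral_mul_rpow_of_le hpq hr0.le hrL
      hg'.1.aestronglyMeasurable hg'p
    rw [one_div_one_div, sub_zero, ← hg r ⟨hr0.le, hrL⟩] at hgr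
    calc |(|g r| * r ^ (-lam - 1))| = |g r| * r ^ (-lam - 1) := abs_of_nonneg (by positivity)
      _ ≤ _ * r ^ (1 - δ) * r ^ (-lam - 1) := by gcongr
      _ = _ := by rw [mul_assoc, ← rpow_add hr0]; ring_nf
  refine (setIntegral_Ioc_le_of_abs_le_mul_rpow hL.le (by linarith) hmeas hbound).trans_eq ?_
  rw [show -δ - lam + 1 = 1 - δ - lam by ring, mul_comm]

/-- Hardy-inequality estimate: for `0 < λ < 1`, `p = 1/δ`, `q = 1/(1−δ)` with
`δ ∈ (0, 1−λ)`, there is a constant `C` (depending only on `L, λ, p`) such that every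
absolutely continuous `g` on `[0,L]` with `g(0) = 0` and `g' ∈ L^p(0,L)` satisfies
`∫₀^L |g(r)| r^{−λ−1} dr ≤ C ‖g'‖_{L^p(0,L)}`. -/
theorem hardy_boundary_estimate (L lam δ p q : ℝ) (hL : 0 < L)
    (hlam : 0 < lam) (hlam1 : lam < 1) (hδ : δ ∈ Ioo (0 : ℝ) (1 - lam))
    (hp : p = 1 / δ) (hq : q = 1 / (1 - δ)) :
    ∃ C : ℝ, 0 < C ∧
      ∀ g g' : ℝ → ℝ,
        IntervalIntegrable g' volume 0 L →
        (∀ x ∈ Icc (0 : ℝ) L, g x = ∫ r in (0 : ℝ)..x, g' r) →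
        IntegrableOn (fun r => |g' r| ^ p) (Ioc (0 : ℝ) L) volume →
        (∫ r in Ioc (0 : ℝ) L, |g r| * r ^ (-lam - 1)) ≤
          C * (∫ r in Ioc (0 : ℝ) L, |g' r| ^ p) ^ (1 / p) :=
  hardy_boundary_estimate_general L lam δ p hL hlam hδ hp
end
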